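/- arXiv:1207.0550 — 2 statements merged into one kernel-verified Lean document; each statement's English description precedes it below -/
import Mathlib

section
/- Let σ be a positive semidefinite matrix on ℂ^d ⊗ ℂ^d ⊗ ℂ^{d'} with Tr σ ≤ 1 that is invariant under exchanging the first two tensor factors, and let {A_i}_{i∈I} be a finite POVM on ℂ^d, i.e. positive semidefinite d×d matrices with Σ_{i∈I} A_i = Id. Set δ := Σ_{i≠j} Tr((A_i ⊗ A_j ⊗ Id) σ). Then ‖Σ_{i∈I} (√(A_i) ⊗ Id) Tr₂(σ) (√(A_i) ⊗ Id) − Tr₂(σ)‖₁ ≤ 2√δ + δ, where Tr₂ denotes the partial trace over the second tensor factor (so that Tr₂(σ) is a matrix on ℂ^d ⊗ ℂ^{d'}, and in the displayed expression √(A_i) acts on the first factor and Id on ℂ^{d'}). -/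
open scoped Kronecker ComplexConjugate ComplexOrder Matrix

namespace MIP

noncomputable section

abbrev Mat (d : ℕ) := Matrix (Fin d) (Fin d) ℂ

/-- Real part of the trace. -/
def rTr {m : Type*} [Fintype m] (M : Matrix m m ℂ) : ℝ := M.trace.re

/-- Positive semidefinite square root (`0` if the matrix is not PSD). -/
def psqrt {m : Type*} [Fintype m] [DecidableEq m] (A : Matrix m m ℂ) : Matrix m m ℂ :=
  letI := Classical.propDecidable A.PosSemidef
  if h : A.PosSemidef then
    h.1.eigenvectorUnitary.1 * Matrix.diagonal ((↑) ∘ (√·) ∘ h.1.eigenvalues) *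
      (star h.1.eigenvectorUnitary : Matrix m m ℂ)
  else 0

/-- Loewner order `A ≤ B`. -/
def PSDle {m : Type*} [Fintype m] (A B : Matrix m m ℂ) : Prop := (B - A).PosSemidef

/-- Trace norm of a square complex matrix. -/
def traceNorm {m : Type*} [Fintype m] [DecidableEq m] (M : Matrix m m ℂ) : ℝ :=
  rTr (psqrt (Mᴴ * M))

/-- `‖X‖_ρ² = Tr (X Xᴴ ρ)`. -/
def rhoNormSq {d : ℕ} (ρ X : Mat d) : ℝ := rTr (X * Xᴴ * ρ)

/-- `⟨ψ| M 0 ⊗ ⋯ ⊗ M (r-1) |ψ⟩` (real part). -/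
def tExp {r d : ℕ} (ψ : (Fin r → Fin d) → ℂ) (M : Fin r → Mat d) : ℝ :=
  (∑ v : Fin r → Fin d, ∑ w : Fin r → Fin d,
      conj (ψ v) * (∏ i, M i (v i) (w i)) * ψ w).re

/-- `⟨ψ| M 0 ⊗ ⋯ ⊗ M (r-1) |ψ⟩` (complex value). -/
def tExpC {r d : ℕ} (ψ : (Fin r → Fin d) → ℂ) (M : Fin r → Mat d) : ℂ :=
  ∑ v : Fin r → Fin d, ∑ w : Fin r → Fin d,
      conj (ψ v) * (∏ i, M i (v i) (w i)) * ψ w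

/-- Invariance of a vector in `(ℂ^d)^{⊗r}` under all permutations of the factors. -/
def PermInvariant {r d : ℕ} (ψ : (Fin r → Fin d) → ℂ) : Prop :=
  ∀ σ : Equiv.Perm (Fin r), ∀ v, ψ (v ∘ σ) = ψ v

/-- Reduced density matrix of `|ψ⟩⟨ψ|` on register `i`. -/
def red1 {r d : ℕ} (ψ : (Fin r → Fin d) → ℂ) (i : Fin r) : Mat d :=
  Matrix.of fun j k => ∑ v : Fin r → Fin d,
    if (v i).val = 0 then ψ (Function.update v i j) * conj (ψ (Function.update v i k)) else 0

/-- Reduced density matrix of `|ψ⟩⟨ψ|` on registers `i₁, i₂`. -/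
def red2 {r d : ℕ} (ψ : (Fin r → Fin d) → ℂ) (i₁ i₂ : Fin r) :
    Matrix (Fin d × Fin d) (Fin d × Fin d) ℂ :=
  Matrix.of fun a b => ∑ v : Fin r → Fin d,
    if (v i₁).val = 0 ∧ (v i₂).val = 0 then
      ψ (Function.update (Function.update v i₁ a.1) i₂ a.2) *
        conj (ψ (Function.update (Function.update v i₁ b.1) i₂ b.2))
    else 0

/-- A symmetric projective strategy with `r` provers, questions in `F^n`,
answers in `F`, on local dimension `d`. -/
structure Strategy (r n d : ℕ) (F : Type*) [Field F] [Fintype F] where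
  ψ : (Fin r → Fin d) → ℂ
  A : (Fin n → F) → F → Mat d
  unit : ∑ v : Fin r → Fin d, Complex.normSq (ψ v) = 1
  perm : PermInvariant ψ
  herm : ∀ x a, (A x a).IsHermitian
  proj : ∀ x a, A x a * A x a = A x a
  complete : ∀ x, ∑ a : F, A x a = 1

variable {F : Type*} [Field F] [Fintype F] [DecidableEq F]

/-- Consistency-test acceptance probability. -/
def consProb {r n d : ℕ} (S : Strategy r n d F) : ℝ :=
  (∑ x : Fin n → F, ∑ a : F, tExp S.ψ fun _ => S.A x a) / (Fintype.card F : ℝ) ^ n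

/-- Linearity-test acceptance probability in direction `i`. -/
def linProbDir {r n d : ℕ} (S : Strategy r n d F) (i : Fin n) : ℝ :=
  (∑ x : Fin n → F, ∑ yi : F, ∑ zi : F,
      if yi ≠ x i ∧ zi ≠ x i ∧ yi ≠ zi then
        ∑ α : F, ∑ β : F,
          tExp S.ψ fun j =>
            if j.val = 0 then S.A x (α * x i + β)
            else if j.val = 1 then S.A (Function.update x i yi) (α * yi + β)
            else if j.val = 2 then S.A (Function.update x i zi) (α * zi + β)
            else 1
      else 0) /
    ((Fintype.card F : ℝ) ^ n * ((Fintype.card F : ℝ) - 1) * ((Fintype.card F : ℝ) - 2))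

/-- Linearity-test acceptance probability (averaged over the direction). -/
def linProb {r n d : ℕ} (S : Strategy r n d F) : ℝ :=
  (∑ i : Fin n, linProbDir S i) / n

/-- A multilinear function `F^k → F`. -/
def IsMultilinear {k : ℕ} (g : (Fin k → F) → F) : Prop :=
  ∀ (i : Fin k) (x : Fin k → F), ∃ α β : F, ∀ t : F, g (Function.update x i t) = α * t + β

/-- First `k` coordinates `x_{≤k}`. -/
def xle {n k : ℕ} (hk : k ≤ n) (x : Fin n → F) : Fin k → F :=
  fun j => x (Fin.castLE hk j)

/-- Last `n - k` coordinates `x_{>k}`. -/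
def xgt {n : ℕ} (k : ℕ) (hk : k ≤ n) (x : Fin n → F) : Fin (n - k) → F :=
  fun j => x ⟨k + j.val, by have := j.isLt; omega⟩

/-- The restriction `g(·, x_{k+1},…,x_ℓ)` of `g : F^ℓ → F` to its first `k` variables, the last
`ℓ - k` variables being substituted with the corresponding coordinates of `x ∈ F^n`. -/
def midRestrict {n k ℓ : ℕ} (hkl : k ≤ ℓ) (hl : ℓ ≤ n) (g : (Fin ℓ → F) → F) (x : Fin n → F) :
    (Fin k → F) → F :=
  fun u => g fun j =>
    if h : j.val < k then u ⟨j.val, h⟩ else x ⟨j.val, by have := j.isLt; omega⟩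

/-- A family of sub-measurements of arity `k`, with outcomes the multilinear functions
`F^k → F` (the matrices are indexed by all functions, vanishing on non-multilinear ones). -/
structure SubFamily (n d : ℕ) (F : Type*) [Field F] [Fintype F] [DecidableEq F] (k : ℕ) where
  P : (Fin (n - k) → F) → ((Fin k → F) → F) → Mat d
  psd : ∀ y g, (P y g).PosSemidef
  ml : ∀ y g, ¬ IsMultilinear g → P y g = 0
  sub : ∀ y, (1 - ∑ g : (Fin k → F) → F, P y g).PosSemidef

/-- `cons(P,Q)` for arities `k ≤ ℓ`. -/
def consF {n d k ℓ : ℕ} (hkl : k ≤ ℓ) (hl : ℓ ≤ n)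
    (P : SubFamily n d F k) (Q : SubFamily n d F ℓ)
    (ρ : Matrix (Fin d × Fin d) (Fin d × Fin d) ℂ) : ℝ :=
  (∑ x : Fin n → F, ∑ f : (Fin k → F) → F, ∑ g : (Fin ℓ → F) → F,
      if f = midRestrict hkl hl g x then
        rTr ((P.P (xgt k (hkl.trans hl) x) f ⊗ₖ Q.P (xgt ℓ hl x) g) * ρ)
      else 0) / (Fintype.card F : ℝ) ^ n

/-- `inc(P,Q)` for arities `k ≤ ℓ`. -/
def incF {n d k ℓ : ℕ} (hkl : k ≤ ℓ) (hl : ℓ ≤ n)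
    (P : SubFamily n d F k) (Q : SubFamily n d F ℓ)
    (ρ : Matrix (Fin d × Fin d) (Fin d × Fin d) ℂ) : ℝ :=
  (∑ x : Fin n → F, ∑ f : (Fin k → F) → F, ∑ g : (Fin ℓ → F) → F,
      if f ≠ midRestrict hkl hl g x then
        rTr ((P.P (xgt k (hkl.trans hl) x) f ⊗ₖ Q.P (xgt ℓ hl x) g) * ρ)
      else 0) / (Fintype.card F : ℝ) ^ n

/-- `cons(P,Q)` for arbitrary arities (symmetric convention). -/
def consSym {n d k ℓ : ℕ} (hk : k ≤ n) (hl : ℓ ≤ n)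
    (P : SubFamily n d F k) (Q : SubFamily n d F ℓ)
    (ρ : Matrix (Fin d × Fin d) (Fin d × Fin d) ℂ) : ℝ :=
  if h : k ≤ ℓ then consF h hl P Q ρ else consF (le_of_not_ge h) hk Q P ρ

/-- `inc(P,A)` where `A` are the strategy's measurements (regarded as the arity-0 family). -/
def incA {n d k : ℕ} (hk : k ≤ n) (P : SubFamily n d F k)
    (A : (Fin n → F) → F → Mat d) (ρ : Matrix (Fin d × Fin d) (Fin d × Fin d) ℂ) : ℝ :=
  (∑ x : Fin n → F, ∑ g : (Fin k → F) → F, ∑ a : F,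
      if a ≠ g (xle hk x) then rTr ((P.P (xgt k hk x) g ⊗ₖ A x a) * ρ) else 0) /
    (Fintype.card F : ℝ) ^ n

/-- `Tr_ρ(P)` for a family of sub-measurements, against the one-register density `ρ`. -/
def trF {n d k : ℕ} (P : SubFamily n d F k) (ρ : Mat d) : ℝ :=
  (∑ y : Fin (n - k) → F, ∑ g : (Fin k → F) → F, rTr (P.P y g * ρ)) /
    (Fintype.card F : ℝ) ^ (n - k)

/-- Merge first `k` coordinates `u` and last `n - k` coordinates `y` into a point of `F^n`. -/
def merge {n k : ℕ} (hk : k ≤ n) (u : Fin k → F) (y : Fin (n - k) → F) : Fin n → F :=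
  fun j => if h : j.val < k then u ⟨j.val, h⟩ else y ⟨j.val - k, by have := j.isLt; omega⟩

/-- `E_{x_{≤k}} Ŝ_x^g`, with the last coordinates fixed to `y`. -/
def avgLow {n d k : ℕ} (hk : k ≤ n)
    (Sh : (Fin n → F) → ((Fin k → F) → F) → Mat d)
    (y : Fin (n - k) → F) (g : (Fin k → F) → F) : Mat d :=
  ((Fintype.card F : ℂ) ^ k)⁻¹ • ∑ u : Fin k → F, Sh (merge hk u y) g

/-- Feasibility for the self-improvement convex program. -/
def Feasible {n d k : ℕ} (hk : k ≤ n) (A : (Fin n → F) → F → Mat d)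
    (Sh : (Fin n → F) → ((Fin k → F) → F) → Mat d) : Prop :=
  (∀ x g, ¬ IsMultilinear g → Sh x g = 0) ∧
    ∀ x a, PSDle (∑ g : (Fin k → F) → F,
      if g (xle hk x) = a then Sh x g * (Sh x g)ᴴ else 0) (A x a)

/-- Objective of the self-improvement convex program. -/
def objective {n d k : ℕ} (hk : k ≤ n) (R : SubFamily n d F k) (ρ : Mat d)
    (Sh : (Fin n → F) → ((Fin k → F) → F) → Mat d) : ℝ :=
  (∑ x : Fin n → F, ∑ g : (Fin k → F) → F,
      rhoNormSq ρ (Sh x g - psqrt (R.P (xgt k hk x) g))) / (Fintype.card F : ℝ) ^ n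

/-- Optimum value `ω` of the self-improvement convex program. -/
def progOpt {n d k : ℕ} (hk : k ≤ n) (A : (Fin n → F) → F → Mat d)
    (R : SubFamily n d F k) (ρ : Mat d) : ℝ :=
  sInf {w | ∃ Sh, Feasible hk A Sh ∧ objective hk R ρ Sh = w}


/-- Remove the `i`-th coordinate: `x_{¬i}`. -/
def removeCoord {n : ℕ} (i : Fin n) (x : Fin n → F) : Fin (n - 1) → F :=
  fun j => if h : j.val < i.val then x ⟨j.val, by have := j.isLt; omega⟩
    else x ⟨j.val + 1, by have := j.isLt; omega⟩

/-- Partial trace over the middle factor of `ℂ^d ⊗ ℂ^d ⊗ ℂ^{d'}`. -/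
def ptrace2 {d d' : ℕ} (σ : Matrix (Fin d × Fin d × Fin d') (Fin d × Fin d × Fin d') ℂ) :
    Matrix (Fin d × Fin d') (Fin d × Fin d') ℂ :=
  Matrix.of fun a b => ∑ m : Fin d, σ (a.1, m, a.2) (b.1, m, b.2)

/-- Partial trace over the first factor of `ℂ^d ⊗ ℂ^{d'}`. -/
def ptrFst {d d' : ℕ} (σ : Matrix (Fin d × Fin d') (Fin d × Fin d') ℂ) :
    Matrix (Fin d') (Fin d') ℂ :=
  Matrix.of fun k l => ∑ m : Fin d, σ (m, k) (m, l)

/-- Partial trace over the second factor of `ℂ^d ⊗ ℂ^{d'}`. -/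
def ptrSnd {d d' : ℕ} (σ : Matrix (Fin d × Fin d') (Fin d × Fin d') ℂ) : Mat d :=
  Matrix.of fun i j => ∑ m : Fin d', σ (i, m) (j, m)



/-!
Write `ρ = Tr₂ σ`, `B_i = √A_i ⊗ 1` and `ρ_j = Tr₂ (σ (1 ⊗ A_j ⊗ 1))`, so that `ρ = ∑_j ρ_j`
and `Tr (B_i² ρ_j) = Tr ((A_i ⊗ A_j ⊗ 1) σ)`. The difference then splits as
`∑_j (B_j ρ_j B_j - ρ_j) + ∑_{i ≠ j} B_i ρ_j B_i`, and its trace norm is `Re Tr (U ·)` for the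
unitary `U = sign` of the difference. The off-diagonal part contributes at most
`∑_{i ≠ j} Tr (B_i² ρ_j) = δ`. For the diagonal part, the gentle measurement lemma
(Cauchy–Schwarz for `⟪X, Y⟫ = Tr (Y ρ_j Xᴴ)` after writing `B ρ B - ρ = (B - 1) ρ B + ρ (B - 1)`)
gives `2 √(Tr ((1 - B_j²) ρ_j)) √(Tr ρ_j)`, and Cauchy–Schwarz over `j` gives `2 √δ √(Tr σ)`.
-/

section TraceInequalities

open Matrix
open scoped MatrixOrder

variable {m : Type*} [Fintype m]

lemma re_trace_nonneg {P : Matrix m m ℂ} (hP : 0 ≤ P) : 0 ≤ P.trace.re :=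
  (RCLike.nonneg_iff.mp (nonneg_iff_posSemidef.mp hP).trace_nonneg).1

/-- Cauchy–Schwarz for the `ρ`-weighted trace form `⟪X, Y⟫ = Tr (Y ρ Xᴴ)`. -/
lemma norm_trace_mul_mul_conjTranspose_le {ρ : Matrix m m ℂ} (hρ : 0 ≤ ρ) (X Y : Matrix m m ℂ) :
    ‖(Y * ρ * Xᴴ).trace‖ ≤ √(X * ρ * Xᴴ).trace.re * √(Y * ρ * Yᴴ).trace.re := by
  have hρ' := nonneg_iff_posSemidef.mp hρ
  let := ρ.toMatrixSeminormedAddCommGroup hρ'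
  let := ρ.toMatrixInnerProductSpace hρ'
  exact norm_inner_le_norm (𝕜 := ℂ) X Y

variable [DecidableEq m]

lemma psqrt_eq_sqrt {A : Matrix m m ℂ} (hA : A.PosSemidef) : psqrt A = CFC.sqrt A := by
  rw [psqrt, dif_pos hA, CFC.sqrt_eq_cfc, cfc_nnreal_eq_real _ A, hA.1.cfc_eq]
  simp only [IsHermitian.cfc, Unitary.conjStarAlgAut_apply]
  congr 3
  funext i
  simp [max_eq_left (hA.eigenvalues_nonneg i)]

lemma traceNorm_eq_re_trace_abs (M : Matrix m m ℂ) : traceNorm M = (CFC.abs M).trace.re := by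
  rw [traceNorm, rTr, psqrt_eq_sqrt (posSemidef_conjTranspose_mul_self M), CFC.abs,
    star_eq_conjTranspose]

lemma re_trace_mul_nonneg {P ρ : Matrix m m ℂ} (hP : 0 ≤ P) (hρ : 0 ≤ ρ) :
    0 ≤ (P * ρ).trace.re := by
  have h : P * ρ = P * CFC.sqrt ρ * CFC.sqrt ρ := by rw [mul_assoc, CFC.sqrt_mul_sqrt_self ρ]
  rw [h, trace_mul_cycle]
  exact re_trace_nonneg (conjugate_nonneg_of_nonneg hP (CFC.sqrt_nonneg ρ))

lemma re_trace_mul_le_of_le {X Y ρ : Matrix m m ℂ} (hXY : X ≤ Y) (hρ : 0 ≤ ρ) :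
    (X * ρ).trace.re ≤ (Y * ρ).trace.re := by
  have := re_trace_mul_nonneg (sub_nonneg.mpr hXY) hρ
  rwa [sub_mul, trace_sub, Complex.sub_re, sub_nonneg] at this

lemma re_trace_unitary_mul_le {U P : Matrix m m ℂ} (hU : Uᴴ * U = 1) (hP : 0 ≤ P) :
    (U * P).trace.re ≤ P.trace.re := by
  have hUPU : (U * P * Uᴴ).trace = P.trace := by rw [trace_mul_cycle, hU, one_mul]
  have h := norm_trace_mul_mul_conjTranspose_le hP 1 U
  simp only [conjTranspose_one, mul_one, one_mul] at h
  rw [hUPU, Real.mul_self_sqrt (re_trace_nonneg hP)] at h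
  exact (Complex.re_le_norm _).trans h

lemma re_trace_unitary_mul_mul_conjTranspose_le {U ρ : Matrix m m ℂ} (hU : Uᴴ * U = 1)
    (hρ : 0 ≤ ρ) (X Y : Matrix m m ℂ) :
    (U * Y * ρ * Xᴴ).trace.re ≤ √(X * ρ * Xᴴ).trace.re * √(Y * ρ * Yᴴ).trace.re := by
  have hUY : (U * Y * ρ * (U * Y)ᴴ).trace = (Y * ρ * Yᴴ).trace := by
    rw [conjTranspose_mul, show U * Y * ρ * (Yᴴ * Uᴴ) = U * (Y * ρ * Yᴴ) * Uᴴ by noncomm_ring,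
      trace_mul_cycle, hU, one_mul]
  have h := norm_trace_mul_mul_conjTranspose_le hρ X (U * Y)
  rw [hUY] at h
  exact (Complex.re_le_norm _).trans h

/-- The unitary is `sign H` (with `sign 0 = 1`), so that `U * H = |H|`. -/
lemma exists_unitary_re_trace_mul_eq_traceNorm {H : Matrix m m ℂ} (hH : H.IsHermitian) :
    ∃ U : Matrix m m ℂ, Uᴴ * U = 1 ∧ (U * H).trace.re = traceNorm H := by
  set s : ℝ → ℝ := fun x => if x < 0 then -1 else 1
  have hs : ContinuousOn s (spectrum ℝ H) := H.finite_real_spectrum.continuousOn s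
  have hH' : IsSelfAdjoint H := hH
  refine ⟨cfc s H, ?_, ?_⟩
  · rw [← star_eq_conjTranspose, (cfc_predicate s H).star_eq, ← cfc_mul s s H, ← cfc_one ℝ H]
    refine cfc_congr fun x _ => ?_
    by_cases hx : x < 0 <;> simp [s, hx]
  · have hUH : cfc s H * H = cfc (fun x => s x * x) H := by
      rw [cfc_mul s (fun x => x) H, cfc_id' ℝ H]
    rw [traceNorm_eq_re_trace_abs, CFC.abs_eq_cfc_norm H, hUH]
    congr 2
    refine cfc_congr fun x _ => ?_
    by_cases hx : x < 0
    · simp [s, hx, abs_of_neg hx]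
    · simp [s, hx, abs_of_nonneg (not_lt.mp hx)]

lemma le_one_of_mul_self_le_one {B : Matrix m m ℂ} (hB : 0 ≤ B) (hBB : B * B ≤ 1) : B ≤ 1 := by
  -- operator monotonicity of `CFC.sqrt` needs the C⋆-algebra structure of the operator norm
  open scoped Matrix.Norms.L2Operator in
  simpa [CFC.sqrt_mul_self B hB] using CFC.sqrt_le_sqrt _ _ hBB

lemma mul_self_le_self_of_le_one {B : Matrix m m ℂ} (hB : 0 ≤ B) (hB1 : B ≤ 1) : B * B ≤ B := by
  have h := conjugate_le_conjugate_of_nonneg hB1 (CFC.sqrt_nonneg B)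
  have hS := CFC.sqrt_mul_sqrt_self B hB
  set S := CFC.sqrt B
  rw [mul_one, ← hS, show S * (S * S) * S = S * S * (S * S) by noncomm_ring] at h
  rwa [hS] at h

/-- Gentle measurement lemma. -/
lemma re_trace_unitary_mul_conj_sub_le {U B ρ : Matrix m m ℂ} (hU : Uᴴ * U = 1) (hB : 0 ≤ B)
    (hB1 : B ≤ 1) (hρ : 0 ≤ ρ) :
    (U * (B * ρ * B - ρ)).trace.re ≤ 2 * √((1 - B * B) * ρ).trace.re * √ρ.trace.re := by
  have hBh : Bᴴ = B := (IsSelfAdjoint.of_nonneg hB).star_eq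
  have hconj (X : Matrix m m ℂ) : (X * ρ * Xᴴ).trace = (Xᴴ * X * ρ).trace := by
    rw [trace_mul_cycle, mul_assoc]
  have hBB : B * B ≤ B := mul_self_le_self_of_le_one hB hB1
  have hr : (B * ρ * Bᴴ).trace.re ≤ ρ.trace.re := by
    rw [hconj, hBh]
    simpa using re_trace_mul_le_of_le (hBB.trans hB1) hρ
  have hq : ((B - 1) * ρ * (B - 1)ᴴ).trace.re ≤ ((1 - B * B) * ρ).trace.re := by
    rw [hconj]
    refine re_trace_mul_le_of_le (sub_nonneg.mp ?_) hρ
    have hB' : 0 ≤ B - B * B := sub_nonneg.mpr hBB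
    convert add_nonneg hB' hB' using 1
    rw [conjTranspose_sub, hBh, conjTranspose_one]
    noncomm_ring
  have hsplit : U * (B * ρ * B - ρ) = U * (B - 1) * ρ * Bᴴ + U * 1 * ρ * (B - 1)ᴴ := by
    rw [hBh, conjTranspose_sub, hBh, conjTranspose_one]
    noncomm_ring
  have h1 := re_trace_unitary_mul_mul_conjTranspose_le hU hρ B (B - 1)
  have h2 := re_trace_unitary_mul_mul_conjTranspose_le hU hρ (B - 1) 1
  simp only [mul_one, one_mul, conjTranspose_one] at h2
  calc (U * (B * ρ * B - ρ)).trace.re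
      ≤ √(B * ρ * Bᴴ).trace.re * √((B - 1) * ρ * (B - 1)ᴴ).trace.re +
          √((B - 1) * ρ * (B - 1)ᴴ).trace.re * √ρ.trace.re := by
        rw [hsplit, trace_add, Complex.add_re]
        simpa using add_le_add h1 h2
    _ ≤ √ρ.trace.re * √((1 - B * B) * ρ).trace.re +
          √((1 - B * B) * ρ).trace.re * √ρ.trace.re := by gcongr
    _ = 2 * √((1 - B * B) * ρ).trace.re * √ρ.trace.re := by ring

end TraceInequalities
section MeasurementDisturbance

open Matrix Finset
open scoped MatrixOrder

variable {m I : Type*} [Fintype m] [DecidableEq m] [Fintype I]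

lemma mul_self_le_one_of_sum_mul_self_eq_one {B : I → Matrix m m ℂ} (hB : ∀ i, 0 ≤ B i)
    (hBsum : ∑ i, B i * B i = 1) (j : I) : B j * B j ≤ 1 := by
  classical
  rw [← hBsum]
  refine single_le_sum (f := fun i => B i * B i) (fun i _ => ?_) (mem_univ j)
  simpa [(IsSelfAdjoint.of_nonneg (hB i)).star_eq] using star_mul_self_nonneg (B i)

lemma re_trace_unitary_mul_sum_conj_sub_le {U ρ : Matrix m m ℂ} {B : I → Matrix m m ℂ}
    (hU : Uᴴ * U = 1) (hB : ∀ i, 0 ≤ B i) (hBsum : ∑ i, B i * B i = 1) (hρ : 0 ≤ ρ) (j : I) :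
    (U * (∑ i, B i * ρ * B i - ρ)).trace.re ≤
      2 * √((1 - B j * B j) * ρ).trace.re * √ρ.trace.re + ((1 - B j * B j) * ρ).trace.re := by
  classical
  have hrest : ∑ i ∈ univ.erase j, B i * B i = 1 - B j * B j := by
    rw [← hBsum, ← sum_erase_add _ _ (mem_univ j), add_sub_cancel_right]
  have hBj :=
    le_one_of_mul_self_le_one (hB j) (mul_self_le_one_of_sum_mul_self_eq_one hB hBsum j)
  have hsplit : ∑ i, B i * ρ * B i - ρ =
      (B j * ρ * B j - ρ) + ∑ i ∈ univ.erase j, B i * ρ * B i := by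
    rw [← add_sum_erase _ _ (mem_univ j)]
    abel
  have hoff : (∑ i ∈ univ.erase j, B i * ρ * B i).trace = ((1 - B j * B j) * ρ).trace := by
    rw [← hrest, sum_mul, trace_sum, trace_sum]
    exact sum_congr rfl fun i _ => by rw [trace_mul_cycle, mul_assoc]
  have hgentle := re_trace_unitary_mul_conj_sub_le hU (hB j) hBj hρ
  have hoff_le := re_trace_unitary_mul_le (P := ∑ i ∈ univ.erase j, B i * ρ * B i) hU
    (sum_nonneg fun i _ => conjugate_nonneg_of_nonneg hρ (hB i))
  rw [hoff] at hoff_le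
  rw [hsplit, mul_add, trace_add, Complex.add_re]
  exact add_le_add hgentle hoff_le

theorem traceNorm_sum_conj_sub_le {B ρ : I → Matrix m m ℂ} (hB : ∀ i, 0 ≤ B i)
    (hBsum : ∑ i, B i * B i = 1) (hρ : ∀ j, 0 ≤ ρ j) :
    traceNorm (∑ i, B i * (∑ j, ρ j) * B i - ∑ j, ρ j) ≤
      2 * √(∑ j, ((1 - B j * B j) * ρ j).trace.re) * √(∑ j, ρ j).trace.re +
        ∑ j, ((1 - B j * B j) * ρ j).trace.re := by
  have hD : ∑ i, B i * (∑ j, ρ j) * B i - ∑ j, ρ j = ∑ j, (∑ i, B i * ρ j * B i - ρ j) := by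
    simp only [mul_sum, sum_mul, sum_sub_distrib]
    rw [sum_comm]
  have hDsa : IsSelfAdjoint (∑ i, B i * (∑ j, ρ j) * B i - ∑ j, ρ j) :=
    (IsSelfAdjoint.of_nonneg (sum_nonneg fun i _ =>
      conjugate_nonneg_of_nonneg (sum_nonneg fun j _ => hρ j) (hB i))).sub
      (IsSelfAdjoint.of_nonneg (sum_nonneg fun j _ => hρ j))
  obtain ⟨U, hU, hUD⟩ := exists_unitary_re_trace_mul_eq_traceNorm hDsa
  have hCS := Real.sum_sqrt_mul_sqrt_le univ
    (fun j => re_trace_mul_nonneg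
      (sub_nonneg.mpr (mul_self_le_one_of_sum_mul_self_eq_one hB hBsum j)) (hρ j))
    (fun j => re_trace_nonneg (hρ j))
  rw [← hUD, hD, mul_sum, trace_sum, Complex.re_sum, trace_sum, Complex.re_sum, mul_assoc 2]
  calc ∑ j, (U * (∑ i, B i * ρ j * B i - ρ j)).trace.re
      ≤ ∑ j, (2 * √((1 - B j * B j) * ρ j).trace.re * √(ρ j).trace.re +
          ((1 - B j * B j) * ρ j).trace.re) :=
        sum_le_sum fun j _ => re_trace_unitary_mul_sum_conj_sub_le hU hB hBsum (hρ j) j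
    _ = 2 * ∑ j, √((1 - B j * B j) * ρ j).trace.re * √(ρ j).trace.re +
          ∑ j, ((1 - B j * B j) * ρ j).trace.re := by
        rw [sum_add_distrib, mul_sum]
        simp only [mul_assoc]
    _ ≤ _ := add_le_add_left (mul_le_mul_of_nonneg_left hCS zero_le_two) _

end MeasurementDisturbance

section PartialTrace

open Matrix
open scoped MatrixOrder

variable {d d' : ℕ}

lemma sum_kronecker {ι α l m n p : Type*} [NonUnitalNonAssocSemiring α] (s : Finset ι)
    (A : ι → Matrix l m α) (B : Matrix n p α) :
    (∑ i ∈ s, A i) ⊗ₖ B = ∑ i ∈ s, A i ⊗ₖ B := by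
  ext a b
  simp [Matrix.sum_apply, Finset.sum_mul]

lemma kronecker_sum {ι α l m n p : Type*} [NonUnitalNonAssocSemiring α] (s : Finset ι)
    (A : Matrix l m α) (B : ι → Matrix n p α) :
    A ⊗ₖ (∑ i ∈ s, B i) = ∑ i ∈ s, A ⊗ₖ B i := by
  ext a b
  simp [Matrix.sum_apply, Finset.mul_sum]

lemma ptrace2_sum {ι : Type*} (s : Finset ι)
    (κ : ι → Matrix (Fin d × Fin d × Fin d') (Fin d × Fin d × Fin d') ℂ) :
    ptrace2 (∑ j ∈ s, κ j) = ∑ j ∈ s, ptrace2 (κ j) := by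
  ext a b
  simp only [ptrace2, of_apply, Matrix.sum_apply]
  exact Finset.sum_comm

lemma ptrace2_eq_sum_submatrix
    (κ : Matrix (Fin d × Fin d × Fin d') (Fin d × Fin d × Fin d') ℂ) :
    ptrace2 κ = ∑ k, κ.submatrix (fun a => (a.1, k, a.2)) (fun a => (a.1, k, a.2)) := by
  ext a b
  simp [ptrace2, Matrix.sum_apply]

lemma ptrace2_nonneg {κ : Matrix (Fin d × Fin d × Fin d') (Fin d × Fin d × Fin d') ℂ}
    (hκ : 0 ≤ κ) : 0 ≤ ptrace2 κ := by
  rw [ptrace2_eq_sum_submatrix]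
  exact Finset.sum_nonneg fun k _ =>
    nonneg_iff_posSemidef.mpr ((nonneg_iff_posSemidef.mp hκ).submatrix _)

lemma trace_ptrace2 (κ : Matrix (Fin d × Fin d × Fin d') (Fin d × Fin d × Fin d') ℂ) :
    (ptrace2 κ).trace = κ.trace := by
  simp only [trace, diag, ptrace2, of_apply, Fintype.sum_prod_type]
  exact Finset.sum_congr rfl fun _ _ => Finset.sum_comm

lemma kronecker_one_mul_ptrace2 (C : Mat d)
    (κ : Matrix (Fin d × Fin d × Fin d') (Fin d × Fin d × Fin d') ℂ) :
    (C ⊗ₖ (1 : Mat d')) * ptrace2 κ = ptrace2 ((C ⊗ₖ ((1 : Mat d) ⊗ₖ (1 : Mat d'))) * κ) := by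
  ext a b
  simp only [ptrace2, mul_apply, kroneckerMap_apply, one_apply, mul_ite, mul_one, mul_zero,
    of_apply, Finset.mul_sum, ite_mul, zero_mul, Finset.sum_ite_irrel, Finset.sum_const_zero,
    Fintype.sum_prod_type, Finset.sum_ite_eq, Finset.mem_univ, ↓reduceIte]
  exact Finset.sum_comm

/-- The partial trace is cyclic in the factor it traces out. -/
lemma ptrace2_middle_mul_comm (X : Mat d)
    (κ : Matrix (Fin d × Fin d × Fin d') (Fin d × Fin d × Fin d') ℂ) :
    ptrace2 (((1 : Mat d) ⊗ₖ (X ⊗ₖ (1 : Mat d'))) * κ) =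
      ptrace2 (κ * ((1 : Mat d) ⊗ₖ (X ⊗ₖ (1 : Mat d')))) := by
  ext a b
  simp only [ptrace2, mul_apply, kroneckerMap_apply, one_apply, mul_ite, mul_one, mul_zero,
    ite_mul, one_mul, zero_mul, Fintype.sum_prod_type, Finset.sum_ite_eq, Finset.mem_univ,
    ↓reduceIte, Finset.sum_ite_irrel, Finset.sum_const_zero, of_apply, Finset.sum_ite_eq']
  rw [Finset.sum_comm]
  exact Finset.sum_congr rfl fun _ _ => Finset.sum_congr rfl fun _ _ => mul_comm _ _

/-- `Tr₂ (σ (1 ⊗ A ⊗ 1))`: the part of `Tr₂ σ` on which the second factor has effect `A`. -/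
def condPtrace2 (σ : Matrix (Fin d × Fin d × Fin d') (Fin d × Fin d × Fin d') ℂ) (A : Mat d) :
    Matrix (Fin d × Fin d') (Fin d × Fin d') ℂ :=
  ptrace2 (σ * ((1 : Mat d) ⊗ₖ (A ⊗ₖ (1 : Mat d'))))

variable {σ : Matrix (Fin d × Fin d × Fin d') (Fin d × Fin d × Fin d') ℂ}

lemma condPtrace2_nonneg (hσ : 0 ≤ σ) {A : Mat d} (hA : 0 ≤ A) : 0 ≤ condPtrace2 σ A := by
  set M : Matrix (Fin d × Fin d × Fin d') (Fin d × Fin d × Fin d') ℂ :=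
    (1 : Mat d) ⊗ₖ (CFC.sqrt A ⊗ₖ (1 : Mat d'))
  have hM : 0 ≤ M := nonneg_iff_posSemidef.mpr (PosSemidef.one.kronecker
    ((nonneg_iff_posSemidef.mp (CFC.sqrt_nonneg A)).kronecker PosSemidef.one))
  have hMM : M * M = (1 : Mat d) ⊗ₖ (A ⊗ₖ (1 : Mat d')) := by
    rw [← mul_kronecker_mul, ← mul_kronecker_mul, CFC.sqrt_mul_sqrt_self A hA, one_mul, one_mul]
  rw [condPtrace2, ← hMM, ← mul_assoc, ← ptrace2_middle_mul_comm, ← mul_assoc]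
  exact ptrace2_nonneg (conjugate_nonneg_of_nonneg hσ hM)

lemma sum_condPtrace2 {I : Type*} [Fintype I] {A : I → Mat d} (hAsum : ∑ i, A i = 1) :
    ∑ i, condPtrace2 σ (A i) = ptrace2 σ := by
  simp only [condPtrace2, ← ptrace2_sum, ← Matrix.mul_sum, ← kronecker_sum, ← sum_kronecker,
    hAsum, one_kronecker_one, mul_one]

lemma trace_kronecker_one_mul_condPtrace2 (C A : Mat d) :
    ((C ⊗ₖ (1 : Mat d')) * condPtrace2 σ A).trace = ((C ⊗ₖ (A ⊗ₖ (1 : Mat d'))) * σ).trace := by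
  rw [condPtrace2, kronecker_one_mul_ptrace2, trace_ptrace2, ← mul_assoc, trace_mul_cycle,
    ← mul_kronecker_mul, ← mul_kronecker_mul, one_mul, mul_one, one_mul]

lemma sum_re_trace_one_sub_mul_condPtrace2 {I : Type*} [Fintype I] [DecidableEq I]
    {A : I → Mat d} (hAsum : ∑ i, A i = 1) :
    ∑ j, ((1 - A j ⊗ₖ (1 : Mat d')) * condPtrace2 σ (A j)).trace.re =
      ∑ i, ∑ j, if i ≠ j then rTr ((A i ⊗ₖ (A j ⊗ₖ (1 : Mat d'))) * σ) else 0 := by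
  rw [Finset.sum_comm]
  refine Finset.sum_congr rfl fun j _ => ?_
  rw [← Finset.sum_filter, Finset.filter_ne', Finset.sum_erase_eq_sub (Finset.mem_univ j)]
  simp only [rTr, ← trace_kronecker_one_mul_condPtrace2, ← Complex.re_sum, ← trace_sum,
    ← Finset.sum_mul, ← sum_kronecker, hAsum, one_kronecker_one, sub_mul, trace_sub,
    Complex.sub_re]

theorem traceNorm_sum_conj_ptrace2_sub_le {I : Type*} [Fintype I] [DecidableEq I]
    {A : I → Mat d} (hσ : σ.PosSemidef) (hA : ∀ i, (A i).PosSemidef) (hAsum : ∑ i, A i = 1) :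
    traceNorm (∑ i, (psqrt (A i) ⊗ₖ (1 : Mat d')) * ptrace2 σ * (psqrt (A i) ⊗ₖ (1 : Mat d')) -
        ptrace2 σ) ≤
      2 * √(∑ i, ∑ j, if i ≠ j then rTr ((A i ⊗ₖ (A j ⊗ₖ (1 : Mat d'))) * σ) else 0) * √(rTr σ) +
        ∑ i, ∑ j, if i ≠ j then rTr ((A i ⊗ₖ (A j ⊗ₖ (1 : Mat d'))) * σ) else 0 := by
  have hA' (i : I) : 0 ≤ A i := nonneg_iff_posSemidef.mpr (hA i)
  have hBsq (i : I) : (psqrt (A i) ⊗ₖ (1 : Mat d')) * (psqrt (A i) ⊗ₖ (1 : Mat d')) =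
      A i ⊗ₖ (1 : Mat d') := by
    rw [← mul_kronecker_mul, psqrt_eq_sqrt (hA i), CFC.sqrt_mul_sqrt_self _ (hA' i), one_mul]
  have hB (i : I) : 0 ≤ psqrt (A i) ⊗ₖ (1 : Mat d') := by
    rw [psqrt_eq_sqrt (hA i), nonneg_iff_posSemidef]
    exact (nonneg_iff_posSemidef.mp (CFC.sqrt_nonneg _)).kronecker PosSemidef.one
  have hBsum : ∑ i, (psqrt (A i) ⊗ₖ (1 : Mat d')) * (psqrt (A i) ⊗ₖ (1 : Mat d')) = 1 := by
    simp only [hBsq, ← sum_kronecker, hAsum, one_kronecker_one]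
  have key := traceNorm_sum_conj_sub_le hB hBsum
    fun j => condPtrace2_nonneg (nonneg_iff_posSemidef.mpr hσ) (hA' j)
  simp only [hBsq] at key
  rwa [sum_condPtrace2 hAsum, trace_ptrace2, sum_re_trace_one_sub_mul_condPtrace2 hAsum] at key

end PartialTrace

theorem statement12_general (d d' : ℕ) (I : Type) [Fintype I] [DecidableEq I]
    (σ : Matrix (Fin d × Fin d × Fin d') (Fin d × Fin d × Fin d') ℂ) (A : I → Mat d)
    (hσ : σ.PosSemidef) (hσ1 : rTr σ ≤ 1)
    (hA : ∀ i, (A i).PosSemidef) (hAsum : ∑ i, A i = 1) :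
    traceNorm ((∑ i, (psqrt (A i) ⊗ₖ (1 : Matrix (Fin d') (Fin d') ℂ)) * ptrace2 σ *
          (psqrt (A i) ⊗ₖ (1 : Matrix (Fin d') (Fin d') ℂ))) - ptrace2 σ) ≤
      2 * Real.sqrt (∑ i, ∑ j, if i ≠ j then
          rTr ((A i ⊗ₖ (A j ⊗ₖ (1 : Matrix (Fin d') (Fin d') ℂ))) * σ) else 0) +
        (∑ i, ∑ j, if i ≠ j then
          rTr ((A i ⊗ₖ (A j ⊗ₖ (1 : Matrix (Fin d') (Fin d') ℂ))) * σ) else 0) := by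
  refine (traceNorm_sum_conj_ptrace2_sub_le hσ hA hAsum).trans (add_le_add_left ?_ _)
  exact mul_le_of_le_one_right (by positivity) (Real.sqrt_le_one.mpr hσ1)

theorem statement12 (d d' : ℕ) (I : Type) [Fintype I] [DecidableEq I]
    (σ : Matrix (Fin d × Fin d × Fin d') (Fin d × Fin d × Fin d') ℂ) (A : I → Mat d)
    (hσ : σ.PosSemidef) (hσ1 : rTr σ ≤ 1)
    (hswap : ∀ (i j : Fin d) (k : Fin d') (i' j' : Fin d) (k' : Fin d'),
      σ (i, j, k) (i', j', k') = σ (j, i, k) (j', i', k'))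
    (hA : ∀ i, (A i).PosSemidef) (hAsum : ∑ i, A i = 1) :
    traceNorm ((∑ i, (psqrt (A i) ⊗ₖ (1 : Matrix (Fin d') (Fin d') ℂ)) * ptrace2 σ *
          (psqrt (A i) ⊗ₖ (1 : Matrix (Fin d') (Fin d') ℂ))) - ptrace2 σ) ≤
      2 * Real.sqrt (∑ i, ∑ j, if i ≠ j then
          rTr ((A i ⊗ₖ (A j ⊗ₖ (1 : Matrix (Fin d') (Fin d') ℂ))) * σ) else 0) +
        (∑ i, ∑ j, if i ≠ j then
          rTr ((A i ⊗ₖ (A j ⊗ₖ (1 : Matrix (Fin d') (Fin d') ℂ))) * σ) else 0) :=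
  statement12_general d d' I σ A hσ hσ1 hA hAsum

end

end MIP
end

section
/- Let n ≥ k ≥ ℓ ≥ 1 be integers, let T be a family of sub-measurements of arity k, let V be a family of sub-measurements of arity ℓ, and let {Z_{x_{>k}}^h} (x_{>k} ∈ F^{n−k}, h ∈ ML(F^k,F)) be d×d complex matrices such that E_{x_{>k}∈F^{n−k}} Σ_h Z_{x_{>k}}^h (Z_{x_{>k}}^h)† ≤ Id. Then |E_{x∈F^n} Σ_{h∈ML(F^k,F)} Tr_ρ(Z_{x_{>k}}^h T_{x_{>k}}^h ⊗ V_{x_{>ℓ}}) − E_{x∈F^n} Σ_{(g,h): g = h(·,x_{ℓ+1},…,x_k)} Tr_ρ(Z_{x_{>k}}^h T_{x_{>k}}^h ⊗ V_{x_{>ℓ}}^g)| ≤ √(inc(T,V)), where V_{x_{>ℓ}} := Σ_{g∈ML(F^ℓ,F)} V_{x_{>ℓ}}^g. -/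
open scoped Kronecker ComplexConjugate ComplexOrder Matrix

namespace MIP

noncomputable section

variable {F : Type*} [Field F] [Fintype F] [DecidableEq F]

/-!
Write `P^h = T^h_{x_{>k}}` and `Q^g = V^g_{x_{>ℓ}}`. The difference in the statement is the sum of
`Tr_ρ(Z P^h ⊗ Q^g)` over the mismatched pairs `g ≠ h(·, x_{ℓ+1}, …, x_k)`, and each such term is
the `ρ`-inner product of `Z √P^h ⊗ √Q^g` with `√P^h ⊗ √Q^g`. Cauchy–Schwarz bounds the sum by the
square root of `∑ Tr_ρ(Z P^h Z† ⊗ Q^g)` times that of `∑ Tr_ρ(P^h ⊗ Q^g)`, the latter being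
`|F|^n inc(T, V)`. The former is at most `|F|^n`: drop the mismatch condition, then use
`∑_g Q^g ≤ 1`, `P^h ≤ 1`, the normalisation of `Z` and `Tr ρ ≤ 1`.
-/

open scoped MatrixOrder

lemma div_le_sqrt_div_of_le_sqrt_mul_sqrt {x a b q : ℝ} (hq : 0 < q) (ha : a ≤ q)
    (hx : x ≤ √a * √b) : x / q ≤ √(b / q) := by
  have hsq : √q * √q = q := Real.mul_self_sqrt hq.le
  calc x / q ≤ √q * √b / q := by gcongr; exact hx.trans (by gcongr)
    _ = √(b / q) := by
        rw [Real.sqrt_div' b hq.le, div_eq_div_iff hq.ne' (Real.sqrt_pos.mpr hq).ne']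
        linear_combination √b * hsq

section DensityTrace

variable {ι γ : Type*} [Fintype ι] {ρ : Matrix ι ι ℂ}

lemma rTr_sum (s : Finset γ) (f : γ → Matrix ι ι ℂ) :
    rTr (∑ c ∈ s, f c) = ∑ c ∈ s, rTr (f c) := by
  simp [rTr, Matrix.trace_sum, Complex.re_sum]

lemma rTr_real_smul (r : ℝ) (M : Matrix ι ι ℂ) : rTr ((r : ℂ) • M) = r * rTr M := by
  simp [rTr, Matrix.trace_smul, Complex.mul_re]

lemma rTr_mul_nonneg (hρ : ρ.PosSemidef) {M : Matrix ι ι ℂ} (hM : M.PosSemidef) :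
    0 ≤ rTr (M * ρ) := by
  classical
  obtain ⟨B, rfl⟩ := CStarAlgebra.nonneg_iff_eq_star_mul_self.mp hM.nonneg
  rw [rTr, Matrix.mul_assoc, Matrix.trace_mul_comm, Matrix.star_eq_conjTranspose]
  exact (Complex.nonneg_iff.mp (hρ.mul_mul_conjTranspose_same B).trace_nonneg).1

lemma rTr_mul_mono (hρ : ρ.PosSemidef) {M N : Matrix ι ι ℂ} (h : PSDle M N) :
    rTr (M * ρ) ≤ rTr (N * ρ) := by
  have := rTr_mul_nonneg hρ h
  rwa [Matrix.sub_mul, rTr, Matrix.trace_sub, Complex.sub_re, sub_nonneg] at this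

-- `Tr (X Yᴴ ρ) = Tr (Yᴴ ρ X)` is Mathlib's `ρ`-inner product of `Xᴴ` and `Yᴴ`.
lemma abs_rTr_mul_conjTranspose_mul_le (hρ : ρ.PosSemidef) (A B : Matrix ι ι ℂ) :
    |rTr (A * Bᴴ * ρ)| ≤ √(rTr (A * Aᴴ * ρ)) * √(rTr (B * Bᴴ * ρ)) := by
  let := ρ.toMatrixSeminormedAddCommGroup hρ
  let := ρ.toMatrixInnerProductSpace hρ
  have inner_eq : ∀ X Y : Matrix ι ι ℂ, inner ℂ Xᴴ Yᴴ = (X * Yᴴ * ρ).trace := by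
    intro X Y
    change (Yᴴ * ρ * Xᴴᴴ).trace = _
    rw [Matrix.conjTranspose_conjTranspose, Matrix.mul_assoc, Matrix.trace_mul_comm,
      Matrix.mul_assoc, Matrix.trace_mul_comm]
  have norm_eq : ∀ X : Matrix ι ι ℂ, ‖Xᴴ‖ = √(rTr (X * Xᴴ * ρ)) := fun X => by
    rw [norm_eq_sqrt_re_inner (𝕜 := ℂ), inner_eq]
    rfl
  have := (Complex.abs_re_le_norm _).trans (norm_inner_le_norm (𝕜 := ℂ) Aᴴ Bᴴ)
  rwa [inner_eq, norm_eq, norm_eq] at this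

lemma abs_sum_rTr_mul_conjTranspose_mul_le (hρ : ρ.PosSemidef) (s : Finset γ)
    (A B : γ → Matrix ι ι ℂ) :
    |∑ c ∈ s, rTr (A c * (B c)ᴴ * ρ)| ≤
      √(∑ c ∈ s, rTr (A c * (A c)ᴴ * ρ)) * √(∑ c ∈ s, rTr (B c * (B c)ᴴ * ρ)) :=
  calc |∑ c ∈ s, rTr (A c * (B c)ᴴ * ρ)|
      ≤ ∑ c ∈ s, |rTr (A c * (B c)ᴴ * ρ)| := Finset.abs_sum_le_sum_abs _ _
    _ ≤ ∑ c ∈ s, √(rTr (A c * (A c)ᴴ * ρ)) * √(rTr (B c * (B c)ᴴ * ρ)) :=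
        Finset.sum_le_sum fun _ _ => abs_rTr_mul_conjTranspose_mul_le hρ _ _
    _ ≤ _ := Real.sum_sqrt_mul_sqrt_le s
        (fun _ => rTr_mul_nonneg hρ (Matrix.posSemidef_self_mul_conjTranspose _))
        (fun _ => rTr_mul_nonneg hρ (Matrix.posSemidef_self_mul_conjTranspose _))

end DensityTrace

section Kronecker

variable {ι κ γ : Type*}

lemma kronecker_sum_s14 (A : Matrix ι ι ℂ) (s : Finset γ) (f : γ → Matrix κ κ ℂ) :
    A ⊗ₖ (∑ c ∈ s, f c) = ∑ c ∈ s, A ⊗ₖ f c :=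
  map_sum (Matrix.kroneckerBilinear (R := ℂ) A) f s

lemma sum_kronecker_s14 (s : Finset γ) (f : γ → Matrix ι ι ℂ) (B : Matrix κ κ ℂ) :
    (∑ c ∈ s, f c) ⊗ₖ B = ∑ c ∈ s, f c ⊗ₖ B :=
  map_sum ((Matrix.kroneckerBilinear (R := ℂ)).flip B) f s

variable [Fintype ι] [Fintype κ]

lemma PSDle.kronecker_right {A B : Matrix κ κ ℂ} (h : PSDle A B) {M : Matrix ι ι ℂ}
    (hM : M.PosSemidef) : PSDle (M ⊗ₖ A) (M ⊗ₖ B) := by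
  have hsub : M ⊗ₖ B - M ⊗ₖ A = M ⊗ₖ (B - A) :=
    (map_sub (Matrix.kroneckerBilinear (R := ℂ) M) B A).symm
  unfold PSDle
  rw [hsub]
  exact hM.kronecker h

lemma PSDle.kronecker_left {A B : Matrix ι ι ℂ} (h : PSDle A B) {M : Matrix κ κ ℂ}
    (hM : M.PosSemidef) : PSDle (A ⊗ₖ M) (B ⊗ₖ M) := by
  have hsub : B ⊗ₖ M - A ⊗ₖ M = (B - A) ⊗ₖ M :=
    (map_sub ((Matrix.kroneckerBilinear (R := ℂ)).flip M) B A).symm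
  unfold PSDle
  rw [hsub]
  exact h.kronecker hM

lemma PSDle.mul_mul_conjTranspose {A B : Matrix ι ι ℂ} (h : PSDle A B) (Z : Matrix κ ι ℂ) :
    PSDle (Z * A * Zᴴ) (Z * B * Zᴴ) := by
  unfold PSDle
  rw [← Matrix.sub_mul, ← Matrix.mul_sub]
  exact h.mul_mul_conjTranspose_same Z

variable {ρ : Matrix (ι × κ) (ι × κ) ℂ}

lemma abs_sum_rTr_kronecker_mul_le (hρ : ρ.PosSemidef) (s : Finset γ)
    (Z P : γ → Matrix ι ι ℂ) (Q : γ → Matrix κ κ ℂ)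
    (hP : ∀ c, (P c).PosSemidef) (hQ : ∀ c, (Q c).PosSemidef) :
    |∑ c ∈ s, rTr (((Z c * P c) ⊗ₖ Q c) * ρ)| ≤
      √(∑ c ∈ s, rTr (((Z c * P c * (Z c)ᴴ) ⊗ₖ Q c) * ρ)) *
        √(∑ c ∈ s, rTr ((P c ⊗ₖ Q c) * ρ)) := by
  classical
  -- with `P = Bᴴ B` and `Q = Cᴴ C`, the summands are `ρ`-inner products of
  -- `(Z Bᴴ) ⊗ Cᴴ` and `Bᴴ ⊗ Cᴴ`
  choose B hB using fun c => CStarAlgebra.nonneg_iff_eq_star_mul_self.mp (hP c).nonneg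
  choose C hC using fun c => CStarAlgebra.nonneg_iff_eq_star_mul_self.mp (hQ c).nonneg
  have key := abs_sum_rTr_mul_conjTranspose_mul_le hρ s
    (fun c => (Z c * (B c)ᴴ) ⊗ₖ (C c)ᴴ) (fun c => (B c)ᴴ ⊗ₖ (C c)ᴴ)
  simp only [Matrix.conjTranspose_kronecker, Matrix.conjTranspose_mul,
    Matrix.conjTranspose_conjTranspose, ← Matrix.mul_kronecker_mul] at key
  simp only [hB, hC, Matrix.star_eq_conjTranspose, Matrix.mul_assoc] at key ⊢
  exact key

lemma rTr_kronecker_one_mul_le [DecidableEq ι] [DecidableEq κ] (hρ : ρ.PosSemidef)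
    (hρ1 : rTr ρ ≤ 1) {S : Matrix ι ι ℂ} {r : ℝ} (hr : 0 < r) (h : PSDle ((r : ℂ)⁻¹ • S) 1) :
    rTr ((S ⊗ₖ 1) * ρ) ≤ r := by
  have hle := rTr_mul_mono hρ (h.kronecker_left (Matrix.PosSemidef.one (n := κ)))
  rw [Matrix.one_kronecker_one, Matrix.one_mul, Matrix.smul_kronecker, Matrix.smul_mul,
    ← Complex.ofReal_inv, rTr_real_smul] at hle
  rw [← mul_one r, ← inv_mul_le_iff₀ hr]
  exact hle.trans hρ1

end Kronecker

section Coordinates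

variable {α : Type*} {n k : ℕ} (hk : k ≤ n)

lemma xle_merge (u : Fin k → α) (y : Fin (n - k) → α) : xle hk (merge hk u y) = u := by
  funext j
  simp [xle, merge]

lemma xgt_merge (u : Fin k → α) (y : Fin (n - k) → α) : xgt k hk (merge hk u y) = y := by
  funext j
  simp [xgt, merge]

lemma merge_xle_xgt (x : Fin n → α) : merge hk (xle hk x) (xgt k hk x) = x := by
  funext j
  by_cases h : j.val < k
  · simp [merge, xle, h]
  · simp only [merge, xgt, h, dif_neg, not_false_eq_true]
    congr
    omega

def mergeEquiv : (Fin k → α) × (Fin (n - k) → α) ≃ (Fin n → α) where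
  toFun p := merge hk p.1 p.2
  invFun x := (xle hk x, xgt k hk x)
  left_inv p := by simp [xle_merge, xgt_merge]
  right_inv := merge_xle_xgt hk

lemma sum_comp_xgt [Fintype α] (f : (Fin (n - k) → α) → ℝ) :
    ∑ x, f (xgt k hk x) = (Fintype.card α : ℝ) ^ k * ∑ y, f y := by
  rw [← (mergeEquiv hk).sum_comp, Fintype.sum_prod_type]
  simp [mergeEquiv, xgt_merge, Finset.mul_sum]

end Coordinates

section SubFamily

variable {n d k l : ℕ}

lemma SubFamily.le_one (T : SubFamily n d F k) (y : Fin (n - k) → F) (g : (Fin k → F) → F) :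
    PSDle (T.P y g) 1 :=
  (Finset.single_le_sum (fun g' _ => (T.psd y g').nonneg) (Finset.mem_univ g)).trans
    (Matrix.le_iff.mpr (T.sub y))

lemma SubFamily.sum_rTr_kronecker_le (V : SubFamily n d F l) (y : Fin (n - l) → F)
    {ρ : Matrix (Fin d × Fin d) (Fin d × Fin d) ℂ} (hρ : ρ.PosSemidef) {M : Mat d}
    (hM : M.PosSemidef) :
    ∑ g, rTr ((M ⊗ₖ V.P y g) * ρ) ≤ rTr ((M ⊗ₖ 1) * ρ) := by
  rw [← rTr_sum, ← Finset.sum_mul, ← kronecker_sum_s14]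
  exact rTr_mul_mono hρ (PSDle.kronecker_right (V.sub y) hM)

lemma sum_rTr_conj_kronecker_le_card_pow (hkn : k ≤ n) (hln : l ≤ n) (T : SubFamily n d F k)
    (V : SubFamily n d F l) (Z : (Fin (n - k) → F) → ((Fin k → F) → F) → Mat d)
    {ρ : Matrix (Fin d × Fin d) (Fin d × Fin d) ℂ} (hρ : ρ.PosSemidef) (hρ1 : rTr ρ ≤ 1)
    (hZ : PSDle (((Fintype.card F : ℂ) ^ (n - k))⁻¹ •
      ∑ y : Fin (n - k) → F, ∑ h : (Fin k → F) → F, Z y h * (Z y h)ᴴ) 1)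
    (s : Finset ((Fin n → F) × ((Fin k → F) → F) × ((Fin l → F) → F))) :
    ∑ c ∈ s, rTr (((Z (xgt k hkn c.1) c.2.1 * T.P (xgt k hkn c.1) c.2.1 *
      (Z (xgt k hkn c.1) c.2.1)ᴴ) ⊗ₖ V.P (xgt l hln c.1) c.2.2) * ρ) ≤
      (Fintype.card F : ℝ) ^ n := by
  have hM : ∀ y h, (Z y h * T.P y h * (Z y h)ᴴ).PosSemidef :=
    fun y h => (T.psd y h).mul_mul_conjTranspose_same _
  calc _ ≤ ∑ x, ∑ h, ∑ g, rTr (((Z (xgt k hkn x) h * T.P (xgt k hkn x) h *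
          (Z (xgt k hkn x) h)ᴴ) ⊗ₖ V.P (xgt l hln x) g) * ρ) := by
        simp only [← Fintype.sum_prod_type']
        exact Finset.sum_le_univ_sum_of_nonneg fun _ =>
          rTr_mul_nonneg hρ ((hM _ _).kronecker (V.psd _ _))
    _ ≤ ∑ x, ∑ h, rTr (((Z (xgt k hkn x) h * T.P (xgt k hkn x) h *
          (Z (xgt k hkn x) h)ᴴ) ⊗ₖ 1) * ρ) :=
        Finset.sum_le_sum fun x _ => Finset.sum_le_sum fun h _ =>
          V.sum_rTr_kronecker_le _ hρ (hM _ _)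
    _ ≤ ∑ x, ∑ h, rTr (((Z (xgt k hkn x) h * (Z (xgt k hkn x) h)ᴴ) ⊗ₖ 1) * ρ) := by
        refine Finset.sum_le_sum fun x _ => Finset.sum_le_sum fun h _ => rTr_mul_mono hρ ?_
        simpa using ((T.le_one _ h).mul_mul_conjTranspose (Z _ h)).kronecker_left
          Matrix.PosSemidef.one
    _ = (Fintype.card F : ℝ) ^ k *
          rTr (((∑ y, ∑ h, Z y h * (Z y h)ᴴ) ⊗ₖ 1) * ρ) := by
        rw [sum_comp_xgt hkn (fun y => ∑ h, rTr (((Z y h * (Z y h)ᴴ) ⊗ₖ 1) * ρ))]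
        simp only [sum_kronecker_s14, Finset.sum_mul, rTr_sum]
    _ ≤ (Fintype.card F : ℝ) ^ k * (Fintype.card F : ℝ) ^ (n - k) := by
        gcongr
        exact rTr_kronecker_one_mul_le hρ hρ1 (by positivity) (by push_cast; exact hZ)
    _ = (Fintype.card F : ℝ) ^ n := by rw [← pow_add, Nat.add_sub_cancel' hkn]

end SubFamily

theorem statement14_general (n d k l : ℕ) (F : Type) [Field F] [Fintype F] [DecidableEq F]
    (hlk : l ≤ k) (hkn : k ≤ n)
    (ρ : Matrix (Fin d × Fin d) (Fin d × Fin d) ℂ)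
    (T : SubFamily n d F k) (V : SubFamily n d F l)
    (Z : (Fin (n - k) → F) → ((Fin k → F) → F) → Mat d)
    (hρ : ρ.PosSemidef) (hρ1 : rTr ρ ≤ 1)
    (hZ : PSDle (((Fintype.card F : ℂ) ^ (n - k))⁻¹ •
      ∑ y : Fin (n - k) → F, ∑ h : (Fin k → F) → F, Z y h * (Z y h)ᴴ) 1) :
    |(∑ x : Fin n → F, ∑ h : (Fin k → F) → F,
          rTr (((Z (xgt k hkn x) h * T.P (xgt k hkn x) h) ⊗ₖ
            (∑ g : (Fin l → F) → F, V.P (xgt l (hlk.trans hkn) x) g)) * ρ)) /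
        (Fintype.card F : ℝ) ^ n -
      (∑ x : Fin n → F, ∑ h : (Fin k → F) → F, ∑ g : (Fin l → F) → F,
          if g = midRestrict hlk hkn h x then
            rTr (((Z (xgt k hkn x) h * T.P (xgt k hkn x) h) ⊗ₖ
              V.P (xgt l (hlk.trans hkn) x) g) * ρ)
          else 0) / (Fintype.card F : ℝ) ^ n| ≤
      Real.sqrt ((∑ x : Fin n → F, ∑ h : (Fin k → F) → F, ∑ g : (Fin l → F) → F,
          if g ≠ midRestrict hlk hkn h x then
            rTr ((T.P (xgt k hkn x) h ⊗ₖ V.P (xgt l (hlk.trans hkn) x) g) * ρ)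
          else 0) / (Fintype.card F : ℝ) ^ n) := by
  have hq : (0 : ℝ) < (Fintype.card F : ℝ) ^ n := by positivity
  let s := Finset.univ.filter
    fun c : (Fin n → F) × ((Fin k → F) → F) × ((Fin l → F) → F) =>
      c.2.2 ≠ midRestrict hlk hkn c.2.1 c.1
  have hsplit := Finset.sum_filter_add_sum_filter_not Finset.univ
    (fun c : (Fin n → F) × ((Fin k → F) → F) × ((Fin l → F) → F) =>
      c.2.2 = midRestrict hlk hkn c.2.1 c.1)
    (fun c => rTr (((Z (xgt k hkn c.1) c.2.1 * T.P (xgt k hkn c.1) c.2.1) ⊗ₖ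
      V.P (xgt l (hlk.trans hkn) c.1) c.2.2) * ρ))
  rw [← sub_div, abs_div, abs_of_pos hq]
  simp only [kronecker_sum_s14, Finset.sum_mul, rTr_sum]
  simp only [Finset.sum_filter, Fintype.sum_prod_type] at hsplit
  rw [← hsplit, add_sub_cancel_left]
  have hCS := abs_sum_rTr_kronecker_mul_le hρ s (fun c => Z (xgt k hkn c.1) c.2.1)
    (fun c => T.P (xgt k hkn c.1) c.2.1) (fun c => V.P (xgt l (hlk.trans hkn) c.1) c.2.2)
    (fun _ => T.psd _ _) (fun _ => V.psd _ _)
  have hZTZ := sum_rTr_conj_kronecker_le_card_pow hkn (hlk.trans hkn) T V Z hρ hρ1 hZ s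
  simp only [s, Finset.sum_filter, Fintype.sum_prod_type, ne_eq] at hCS hZTZ ⊢
  exact div_le_sqrt_div_of_le_sqrt_mul_sqrt hq hZTZ hCS

theorem statement14 (n d k l : ℕ) (F : Type) [Field F] [Fintype F] [DecidableEq F]
    (hl1 : 1 ≤ l) (hlk : l ≤ k) (hkn : k ≤ n)
    (ρ : Matrix (Fin d × Fin d) (Fin d × Fin d) ℂ)
    (T : SubFamily n d F k) (V : SubFamily n d F l)
    (Z : (Fin (n - k) → F) → ((Fin k → F) → F) → Mat d)
    (hρ : ρ.PosSemidef) (hρ1 : rTr ρ ≤ 1)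
    (hZ : PSDle (((Fintype.card F : ℂ) ^ (n - k))⁻¹ •
      ∑ y : Fin (n - k) → F, ∑ h : (Fin k → F) → F, Z y h * (Z y h)ᴴ) 1) :
    |(∑ x : Fin n → F, ∑ h : (Fin k → F) → F,
          rTr (((Z (xgt k hkn x) h * T.P (xgt k hkn x) h) ⊗ₖ
            (∑ g : (Fin l → F) → F, V.P (xgt l (hlk.trans hkn) x) g)) * ρ)) /
        (Fintype.card F : ℝ) ^ n -
      (∑ x : Fin n → F, ∑ h : (Fin k → F) → F, ∑ g : (Fin l → F) → F,
          if g = midRestrict hlk hkn h x then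
            rTr (((Z (xgt k hkn x) h * T.P (xgt k hkn x) h) ⊗ₖ
              V.P (xgt l (hlk.trans hkn) x) g) * ρ)
          else 0) / (Fintype.card F : ℝ) ^ n| ≤
      Real.sqrt ((∑ x : Fin n → F, ∑ h : (Fin k → F) → F, ∑ g : (Fin l → F) → F,
          if g ≠ midRestrict hlk hkn h x then
            rTr ((T.P (xgt k hkn x) h ⊗ₖ V.P (xgt l (hlk.trans hkn) x) g) * ρ)
          else 0) / (Fintype.card F : ℝ) ^ n) :=
  statement14_general n d k l F hlk hkn ρ T V Z hρ hρ1 hZ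

end

end MIP
end
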